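/- arXiv:2502.00778 — 4 statements merged into one kernel-verified Lean document; each statement's English description precedes it below -/
import Mathlib

section
/- Let x_j, x_k, x_ℓ, x_r ∈ ℝ³ be the vertices of a tetrahedron E, and set m = (x_j + x_k)/2 (midpoint of edge {x_j, x_k}), G = (x_j + x_k + x_ℓ + x_r)/4 (centroid of E), L = (x_j + x_ℓ + x_k)/3 and R = (x_j + x_r + x_k)/3 (centroids of the faces {x_j, x_ℓ, x_k} and {x_j, x_r, x_k}). Then the sum of the directed-area vectors of the two dual triangular faces of the edge {x_j, x_k} inside E satisfies (1/2)(L − m) × (G − m) + (1/2)(G − m) × (R − m) = (1/6)·[ n_j + (1/2)(n_ℓ + n_r) ], where n_j := (1/2)(x_ℓ − x_k) × (x_r − x_k), n_ℓ := (1/2)(x_k − x_j) × (x_r − x_j), and n_r := (1/2)(x_ℓ − x_j) × (x_k − x_j) are the directed-area vectors of the faces of E opposite x_j, x_ℓ, and x_r, respectively. -/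
/-- Cross product on `ℝ × ℝ × ℝ`. -/
noncomputable def cross (u v : ℝ × ℝ × ℝ) : ℝ × ℝ × ℝ :=
  (u.2.1 * v.2.2 - u.2.2 * v.2.1,
   u.2.2 * v.1 - u.1 * v.2.2,
   u.1 * v.2.1 - u.2.1 * v.1)

/-- In a tetrahedron `E = {x_j, x_k, x_ℓ, x_r}`, the sum of the directed-area vectors of the
two median dual triangular faces of the edge `{x_j, x_k}` equals
`(1/6)[n_j + (1/2)(n_ℓ + n_r)]`, where `n_j`, `n_ℓ`, `n_r` are the directed-area vectors of
the element faces opposite `x_j`, `x_ℓ`, `x_r`. -/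
theorem dual_face_directed_area_tet (xj xk xl xr : ℝ × ℝ × ℝ)
    (m : ℝ × ℝ × ℝ) (hm : m = (1/2 : ℝ) • (xj + xk))
    (G : ℝ × ℝ × ℝ) (hG : G = (1/4 : ℝ) • (xj + xk + xl + xr))
    (L : ℝ × ℝ × ℝ) (hL : L = (1/3 : ℝ) • (xj + xl + xk))
    (R : ℝ × ℝ × ℝ) (hR : R = (1/3 : ℝ) • (xj + xr + xk))
    (nj : ℝ × ℝ × ℝ) (hnj : nj = (1/2 : ℝ) • cross (xl - xk) (xr - xk))
    (nl : ℝ × ℝ × ℝ) (hnl : nl = (1/2 : ℝ) • cross (xk - xj) (xr - xj))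
    (nr : ℝ × ℝ × ℝ) (hnr : nr = (1/2 : ℝ) • cross (xl - xj) (xk - xj)) :
    (1/2 : ℝ) • cross (L - m) (G - m) + (1/2 : ℝ) • cross (G - m) (R - m)
      = (1/6 : ℝ) • (nj + (1/2 : ℝ) • (nl + nr)) := by
  subst hm hG hL hR hnj hnl hnr
  obtain ⟨a1, a2, a3⟩ := xj
  obtain ⟨b1, b2, b3⟩ := xk
  obtain ⟨c1, c2, c3⟩ := xl
  obtain ⟨d1, d2, d3⟩ := xr
  simp only [cross, Prod.smul_mk, Prod.mk_add_mk, Prod.mk_sub_mk, smul_eq_mul,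
    Prod.mk.injEq]
  refine ⟨by ring, by ring, by ring⟩
end

section
/- Let x_j, x_k ∈ ℝ³, let N ≥ 3, and let p₁, …, p_N ∈ ℝ³ with indices taken modulo N (p_{N+1} = p₁), so that the tetrahedra E_i with vertices {x_j, x_k, p_i, p_{i+1}}, i = 1, …, N, form a closed fan around the interior edge {x_j, x_k}. For each i set m = (x_j + x_k)/2, G_i = (x_j + x_k + p_i + p_{i+1})/4, L_i = (x_j + p_{i+1} + x_k)/3, R_i = (x_j + p_i + x_k)/3, and let n_i := (1/2)(L_i − m) × (G_i − m) + (1/2)(G_i − m) × (R_i − m) be the dual-face contribution of E_i to the edge. Then Σ_{i=1}^{N} n_i = (1/6)·Σ_{i=1}^{N} (1/2)(p_{i+1} − x_k) × (p_i − x_k); that is, the lumped directed-area vector of an interior edge equals one sixth of the sum, over the tetrahedra sharing the edge, of the directed-area vectors of the element faces opposite x_j, all side-face contributions cancelling pairwise between adjacent tetrahedra. -/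
/-- Dual-face contribution of the tetrahedron `E_i = {x_j, x_k, p_i, p_{i+1}}` to the
edge `{x_j, x_k}`: the sum of the directed areas of the two dual triangles
`(m, L_i, G_i)` and `(m, G_i, R_i)`. -/
noncomputable def dualContrib (xj xk : ℝ × ℝ × ℝ) (p : ℕ → ℝ × ℝ × ℝ) (i : ℕ) : ℝ × ℝ × ℝ :=
  let m := (1/2 : ℝ) • (xj + xk)
  let G := (1/4 : ℝ) • (xj + xk + p i + p (i + 1))
  let L := (1/3 : ℝ) • (xj + p (i + 1) + xk)
  let R := (1/3 : ℝ) • (xj + p i + xk)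
  (1/2 : ℝ) • cross (L - m) (G - m) + (1/2 : ℝ) • cross (G - m) (R - m)

lemma cross_add_right (u a b : ℝ × ℝ × ℝ) :
    cross u (a + b) = cross u a + cross u b := by
  simp only [cross, Prod.mk_add_mk, Prod.fst_add, Prod.snd_add, Prod.mk.injEq]
  refine ⟨by ring, by ring, by ring⟩

lemma cross_zero_right (u : ℝ × ℝ × ℝ) : cross u 0 = 0 := by
  simp [cross, Prod.ext_iff]

lemma cross_sum_right (u : ℝ × ℝ × ℝ) (s : Finset ℕ) (f : ℕ → ℝ × ℝ × ℝ) :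
    ∑ i ∈ s, cross u (f i) = cross u (∑ i ∈ s, f i) := by
  induction s using Finset.cons_induction with
  | empty => simp [cross_zero_right]
  | cons a s ha ih =>
      rw [Finset.cons_eq_insert, Finset.sum_insert ha, Finset.sum_insert ha,
        cross_add_right, ih]

lemma dualContrib_eq (xj xk : ℝ × ℝ × ℝ) (p : ℕ → ℝ × ℝ × ℝ) (i : ℕ) :
    dualContrib xj xk p i
      = (1/6 : ℝ) • ((1/2 : ℝ) • cross (p (i + 1) - xk) (p i - xk))
        + (1/12 : ℝ) • cross ((1/2 : ℝ) • (xj - xk)) (p (i + 1) - p i) := by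
  simp only [dualContrib]
  generalize p (i + 1) = r
  generalize p i = q
  obtain ⟨a1, a2, a3⟩ := xj
  obtain ⟨b1, b2, b3⟩ := xk
  obtain ⟨q1, q2, q3⟩ := q
  obtain ⟨r1, r2, r3⟩ := r
  simp only [dualContrib, cross, Prod.smul_mk, Prod.mk_add_mk, Prod.mk_sub_mk, smul_eq_mul,
    Prod.mk.injEq]
  refine ⟨by ring, by ring, by ring⟩

/-- For an interior edge `{x_j, x_k}` surrounded by a closed fan of tetrahedra
`E_i = {x_j, x_k, p_i, p_{i+1}}`, `i = 1, …, N` (indices mod `N`), the lumped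
directed-area vector equals one sixth of the sum, over the tetrahedra sharing the edge,
of the directed-area vectors of the element faces opposite `x_j`; all side-face
contributions cancel pairwise between adjacent tetrahedra. -/
theorem lumped_directed_area_interior_edge_tet (xj xk : ℝ × ℝ × ℝ)
    (N : ℕ) (hN : 3 ≤ N) (p : ℕ → ℝ × ℝ × ℝ) (hp : p (N + 1) = p 1) :
    (∑ i ∈ Finset.Icc 1 N, dualContrib xj xk p i)
      = (1/6 : ℝ) • ∑ i ∈ Finset.Icc 1 N,
          (1/2 : ℝ) • cross (p (i + 1) - xk) (p i - xk) := by
  have htel : ∑ i ∈ Finset.Icc 1 N, (p (i + 1) - p i) = 0 := by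
    have h1 : (1 : ℕ) ≤ N := by omega
    have hI : Finset.Icc 1 N = Finset.Ico 1 (N + 1) := by
      rw [Finset.Ico_add_one_right_eq_Icc]
    rw [hI, Finset.sum_Ico_eq_sum_range]
    have h2 : N + 1 - 1 = N := by omega
    rw [h2]
    calc ∑ i ∈ Finset.range N, (p (1 + i + 1) - p (1 + i))
        = ∑ i ∈ Finset.range N, (p (i + 1 + 1) - p (i + 1)) := by
          apply Finset.sum_congr rfl; intro x _; congr 2 <;> omega
      _ = p (N + 1) - p (0 + 1) := Finset.sum_range_sub (fun i => p (i + 1)) N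
      _ = 0 := by rw [hp]; simp
  calc ∑ i ∈ Finset.Icc 1 N, dualContrib xj xk p i
      = ∑ i ∈ Finset.Icc 1 N,
          ((1/6 : ℝ) • ((1/2 : ℝ) • cross (p (i + 1) - xk) (p i - xk))
            + (1/12 : ℝ) • cross ((1/2 : ℝ) • (xj - xk)) (p (i + 1) - p i)) := by
        exact Finset.sum_congr rfl fun i _ => dualContrib_eq xj xk p i
    _ = (1/6 : ℝ) • ∑ i ∈ Finset.Icc 1 N, (1/2 : ℝ) • cross (p (i + 1) - xk) (p i - xk)
          + (1/12 : ℝ) • ∑ i ∈ Finset.Icc 1 N, cross ((1/2 : ℝ) • (xj - xk)) (p (i + 1) - p i) := by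
        rw [Finset.sum_add_distrib, Finset.smul_sum, Finset.smul_sum]
    _ = (1/6 : ℝ) • ∑ i ∈ Finset.Icc 1 N, (1/2 : ℝ) • cross (p (i + 1) - xk) (p i - xk) := by
        rw [cross_sum_right, htel, cross_zero_right, smul_zero, add_zero]
end

section
/- Let x_j, x_k ∈ ℝ³, let N ≥ 2, and let p₁, …, p_N ∈ ℝ³, so that the tetrahedra E_i with vertices {x_j, x_k, p_i, p_{i+1}}, i = 1, …, N − 1, form an open fan around the boundary edge {x_j, x_k}, whose two boundary faces are {x_j, x_k, p₁} and {x_j, x_k, p_N}. For each i set m = (x_j + x_k)/2, G_i = (x_j + x_k + p_i + p_{i+1})/4, L_i = (x_j + p_{i+1} + x_k)/3, R_i = (x_j + p_i + x_k)/3, and n_i := (1/2)(L_i − m) × (G_i − m) + (1/2)(G_i − m) × (R_i − m). Then Σ_{i=1}^{N−1} n_i = (1/6)·Σ_{i=1}^{N−1} (1/2)(p_{i+1} − x_k) × (p_i − x_k) + (1/12)·(n_{B₁} + n_{B₂}), where n_{B₁} := (1/2)(x_k − x_j) × (p₁ − x_j) and n_{B₂} := (1/2)(p_N − x_j) × (x_k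 − x_j) are the directed-area vectors of the two boundary faces; that is, for a boundary edge the interior-edge formula requires a correction of one twelfth of each boundary-face directed-area vector. -/
/-- Auxiliary potential for the telescoping correction term. -/
noncomputable def Faux (xj xk : ℝ × ℝ × ℝ) (p : ℕ → ℝ × ℝ × ℝ) (i : ℕ) : ℝ × ℝ × ℝ :=
  (1/12 : ℝ) • ((1/2 : ℝ) • cross (p i - xj) (xk - xj))

/-- Split the dual contribution into the interior-edge term plus a telescoping part. -/
lemma dual_split (xj xk : ℝ × ℝ × ℝ) (p : ℕ → ℝ × ℝ × ℝ) (i : ℕ) :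
    dualContrib xj xk p i
      = (1/6 : ℝ) • ((1/2 : ℝ) • cross (p (i + 1) - xk) (p i - xk))
        + (Faux xj xk p (i + 1) - Faux xj xk p i) := by
  refine Prod.ext ?_ (Prod.ext ?_ ?_) <;>
    simp only [dualContrib, Faux, cross, Prod.smul_fst, Prod.smul_snd, Prod.fst_add,
      Prod.snd_add, Prod.fst_sub, Prod.snd_sub, smul_eq_mul] <;> ring

lemma telescope (F : ℕ → ℝ × ℝ × ℝ) : ∀ n : ℕ, 1 ≤ n →
    (∑ i ∈ Finset.Icc 1 n, (F (i + 1) - F i)) = F (n + 1) - F 1 := by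
  intro n hn
  induction n with
  | zero => omega
  | succ k ih =>
    rcases Nat.eq_or_lt_of_le hn with h | h
    · simp [← h]
    · have hk : 1 ≤ k := by omega
      rw [Finset.sum_Icc_succ_top (by omega : 1 ≤ k + 1), ih hk]
      abel

/-- For a boundary edge `{x_j, x_k}` surrounded by an open fan of tetrahedra
`E_i = {x_j, x_k, p_i, p_{i+1}}`, `i = 1, …, N − 1`, with boundary faces
`{x_j, x_k, p₁}` and `{x_j, x_k, p_N}`, the lumped directed-area vector equals the
interior-edge formula plus a correction of one twelfth of each boundary-face
directed-area vector. -/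
theorem lumped_directed_area_boundary_edge_tet (xj xk : ℝ × ℝ × ℝ)
    (N : ℕ) (hN : 2 ≤ N) (p : ℕ → ℝ × ℝ × ℝ)
    (nB1 : ℝ × ℝ × ℝ) (hnB1 : nB1 = (1/2 : ℝ) • cross (xk - xj) (p 1 - xj))
    (nB2 : ℝ × ℝ × ℝ) (hnB2 : nB2 = (1/2 : ℝ) • cross (p N - xj) (xk - xj)) :
    (∑ i ∈ Finset.Icc 1 (N - 1), dualContrib xj xk p i)
      = (1/6 : ℝ) • (∑ i ∈ Finset.Icc 1 (N - 1),
          (1/2 : ℝ) • cross (p (i + 1) - xk) (p i - xk))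
        + (1/12 : ℝ) • (nB1 + nB2) := by
  have h1 : N - 1 + 1 = N := by omega
  calc (∑ i ∈ Finset.Icc 1 (N - 1), dualContrib xj xk p i)
      = ∑ i ∈ Finset.Icc 1 (N - 1),
          ((1/6 : ℝ) • ((1/2 : ℝ) • cross (p (i + 1) - xk) (p i - xk))
            + (Faux xj xk p (i + 1) - Faux xj xk p i)) :=
        Finset.sum_congr rfl fun i _ => dual_split xj xk p i
    _ = (1/6 : ℝ) • (∑ i ∈ Finset.Icc 1 (N - 1),
          (1/2 : ℝ) • cross (p (i + 1) - xk) (p i - xk))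
        + (Faux xj xk p N - Faux xj xk p 1) := by
        rw [Finset.sum_add_distrib, telescope (Faux xj xk p) (N - 1) (by omega), h1,
          ← Finset.smul_sum]
    _ = _ := by
        congr 1
        rw [hnB1, hnB2]
        refine Prod.ext ?_ (Prod.ext ?_ ?_) <;>
          simp only [Faux, cross, Prod.smul_fst, Prod.smul_snd, Prod.fst_add,
            Prod.snd_add, Prod.fst_sub, Prod.snd_sub, smul_eq_mul] <;> ring
end

section
/- Let x₁, x₂, x₃, x₄ ∈ ℝ³. The three-dimensional Lebesgue measure of the convex hull of the eight points {x₁, (x₁ + x₂)/2, (x₁ + x₃)/2, (x₁ + x₄)/2, (x₁ + x₂ + x₃)/3, (x₁ + x₂ + x₄)/3, (x₁ + x₃ + x₄)/3, (x₁ + x₂ + x₃ + x₄)/4} equals one fourth of the three-dimensional Lebesgue measure of the convex hull of {x₁, x₂, x₃, x₄}; that is, the median dual volume contribution of a tetrahedron to each of its vertices is exactly 1/4 of the tetrahedron's volume. -/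
/-!
Map the corner simplex `0, e₀, e₁, e₂` onto the tetrahedron by the affine map that sends a point
to the combination of `x₁, …, x₄` weighted by its barycentric coordinates. Affine maps scale all
volumes by the same factor, so it suffices to treat the corner simplex. There the convex hull of
the eight points is the cell of points whose barycentric coordinate at the origin is the largest:
for each ordering of the other three coordinates, the corresponding piece of the cell is the Kuhn
simplex spanned by a vertex, an edge midpoint, a face centroid and the centroid. In any dimension
`n` the `n + 1` cells of the vertices cover the simplex, meet in hyperplanes, and are exchanged by
the affine involutions that swap two barycentric coordinates, which preserve volume since their
determinant is `± 1`. Hence each cell has `1 / (n + 1)` of the volume of the simplex.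
-/

open MeasureTheory

namespace MeasureTheory.Measure

variable {F : Type*} [NormedAddCommGroup F] [NormedSpace ℝ F] [MeasurableSpace F] [BorelSpace F]
  [FiniteDimensional ℝ F] (μ : Measure F) [μ.IsAddHaarMeasure]

theorem addHaar_image_affineMap (f : F →ᵃ[ℝ] F) (s : Set F) :
    μ (f '' s) = ENNReal.ofReal |LinearMap.det f.linear| * μ s := by
  have hf : (f : F → F) = (· + f 0) ∘ f.linear := f.decomp
  rw [hf, Set.image_comp, Set.image_add_right, measure_preimage_add_right,
    addHaar_image_linearMap]

theorem addHaar_image_affineMap_of_involutive {f : F →ᵃ[ℝ] F} (hf : Function.Involutive f)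
    (s : Set F) : μ (f '' s) = μ s := by
  have hsq : LinearMap.det f.linear * LinearMap.det f.linear = 1 := by
    rw [← LinearMap.det_comp, ← AffineMap.comp_linear, show f.comp f = AffineMap.id ℝ F from
      AffineMap.ext hf, AffineMap.id_linear, LinearMap.det_id]
  rcases mul_self_eq_one_iff.mp hsq with h | h <;> simp [addHaar_image_affineMap, h]

theorem addHaar_affineMap_preimage_zero {g : F →ᵃ[ℝ] ℝ} {p : F} (hp : g p ≠ 0) :
    μ (g ⁻¹' {0}) = 0 := by
  have hs : ((affineSpan ℝ {(0 : ℝ)}).comap g : Set F) = g ⁻¹' {0} := by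
    rw [AffineSubspace.coe_comap, AffineSubspace.coe_affineSpan_singleton]
  rw [← hs]
  refine addHaar_affineSubspace μ _ fun htop => hp ?_
  have : p ∈ (affineSpan ℝ {(0 : ℝ)}).comap g := htop ▸ AffineSubspace.mem_top ℝ F p
  simpa [← SetLike.mem_coe, hs] using this

end MeasureTheory.Measure

namespace MedianDual

section CornerSimplex

variable {n : ℕ}

local notation "E" n => EuclideanSpace ℝ (Fin n)

/-- Barycentric coordinates with respect to the simplex with vertices `0, e₀, …, e_{n-1}`;
the coordinate of the vertex `0` is the one at index `0`. -/
noncomputable def baryCoord : (E n) →ᵃ[ℝ] (Fin (n + 1) → ℝ) :=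
  (LinearMap.pi (Fin.cons (-∑ i, (EuclideanSpace.proj (𝕜 := ℝ) i).toLinearMap)
      fun i => (EuclideanSpace.proj (𝕜 := ℝ) i).toLinearMap)).toAffineMap +
    AffineMap.const ℝ (E n) (Pi.single 0 1 : Fin (n + 1) → ℝ)

@[simp] lemma baryCoord_apply_zero (y : E n) : baryCoord y 0 = 1 - ∑ i, y i := by
  simp only [baryCoord, AffineMap.coe_add, LinearMap.coe_toAffineMap, AffineMap.coe_const,
    Pi.add_apply, Function.const_apply, LinearMap.pi_apply, Fin.cons_zero, LinearMap.neg_apply,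
    LinearMap.coe_sum, ContinuousLinearMap.coe_coe, EuclideanSpace.coe_proj, Finset.sum_apply,
    Pi.single_eq_same]
  ring

@[simp] lemma baryCoord_apply_succ (y : E n) (i : Fin n) : baryCoord y i.succ = y i := by
  simp [baryCoord]

lemma sum_baryCoord (y : E n) : ∑ k, baryCoord y k = 1 := by
  simp [Fin.sum_univ_succ]

lemma baryCoord_injective : Function.Injective (baryCoord : (E n) → Fin (n + 1) → ℝ) :=
  fun y z h => by ext i; simpa using congrFun h i.succ

noncomputable def cornerVertex : Fin (n + 1) → E n :=
  Fin.cons 0 fun i => EuclideanSpace.single i 1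

lemma baryCoord_cornerVertex (k : Fin (n + 1)) :
    baryCoord (cornerVertex k) = Pi.single k 1 := by
  funext m
  cases k using Fin.cases <;> cases m using Fin.cases <;>
    simp [cornerVertex, Pi.single_apply, eq_comm]

lemma sum_baryCoord_smul_cornerVertex (y : E n) : ∑ k, baryCoord y k • cornerVertex k = y := by
  ext m
  simp [Fin.sum_univ_succ, cornerVertex, Pi.single_apply]

variable (n) in
def cornerSimplex : Set (E n) := {y | ∀ k, 0 ≤ baryCoord y k}

lemma convexHull_range_cornerVertex :
    convexHull ℝ (Set.range cornerVertex) = cornerSimplex n := by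
  refine subset_antisymm (convexHull_min ?_ ?_) fun y hy => ?_
  · rintro _ ⟨k, rfl⟩ m
    rw [baryCoord_cornerVertex]
    exact (Pi.single_nonneg (α := fun _ => ℝ)).mpr zero_le_one m
  · exact (convex_Ici 0).affine_preimage baryCoord
  · rw [← sum_baryCoord_smul_cornerVertex y]
    exact (convex_convexHull ℝ _).sum_mem (fun k _ => hy k) (sum_baryCoord y)
      fun k _ => subset_convexHull ℝ _ (Set.mem_range_self k)

variable (n) in
/-- The part of the median dual cell of the vertex `j` inside the corner simplex. -/
def vertexCell (j : Fin (n + 1)) : Set (E n) :=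
  {y | ∀ k, 0 ≤ baryCoord y k ∧ baryCoord y k ≤ baryCoord y j}

lemma convex_vertexCell (j : Fin (n + 1)) : Convex ℝ (vertexCell n j) := by
  intro x hx y hy a b ha hb hab k
  simp only [Convex.combo_affine_apply hab, Pi.add_apply, Pi.smul_apply, smul_eq_mul]
  constructor <;> nlinarith [hx k, hy k]

lemma isClosed_vertexCell (j : Fin (n + 1)) : IsClosed (vertexCell n j) := by
  have hc : Continuous (baryCoord : (E n) → Fin (n + 1) → ℝ) :=
    baryCoord.continuous_of_finiteDimensional
  simp only [vertexCell, Set.ofPred_forall]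
  exact isClosed_iInter fun k => (isClosed_le continuous_const ((continuous_apply k).comp hc)).inter
    (isClosed_le ((continuous_apply k).comp hc) ((continuous_apply j).comp hc))

lemma iUnion_vertexCell : ⋃ j, vertexCell n j = cornerSimplex n := by
  ext y
  simp only [Set.mem_iUnion, vertexCell, cornerSimplex, Set.mem_ofPred_eq, forall_and]
  refine ⟨fun ⟨_, h, _⟩ => h, fun h => ?_⟩
  obtain ⟨j, hj⟩ := Finite.exists_max (baryCoord y)
  exact ⟨j, h, hj⟩

lemma volume_setOf_baryCoord_eq {j k : Fin (n + 1)} (hjk : j ≠ k) :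
    volume {y : E n | baryCoord y j = baryCoord y k} = 0 := by
  let g : (E n) →ᵃ[ℝ] ℝ := (AffineMap.proj j).comp baryCoord - (AffineMap.proj k).comp baryCoord
  have hg : {y : E n | baryCoord y j = baryCoord y k} = g ⁻¹' {0} := by
    ext y
    simp [g, sub_eq_zero]
  rw [hg]
  refine Measure.addHaar_affineMap_preimage_zero volume (p := cornerVertex j) ?_
  simp [g, baryCoord_cornerVertex, hjk.symm]

noncomputable def permuteCoord (τ : Equiv.Perm (Fin (n + 1))) : (E n) →ᵃ[ℝ] E n :=
  ((WithLp.linearEquiv 2 ℝ (Fin n → ℝ)).symm.toLinearMap ∘ₗ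
    LinearMap.funLeft ℝ ℝ (τ ∘ Fin.succ)).toAffineMap.comp baryCoord

lemma permuteCoord_apply (τ : Equiv.Perm (Fin (n + 1))) (y : E n) (i : Fin n) :
    permuteCoord τ y i = baryCoord y (τ i.succ) :=
  rfl

lemma baryCoord_permuteCoord (τ : Equiv.Perm (Fin (n + 1))) (y : E n) :
    baryCoord (permuteCoord τ y) = baryCoord y ∘ τ := by
  funext k
  cases k using Fin.cases with
  | zero =>
    have h := sum_baryCoord y
    rw [← Equiv.sum_comp τ, Fin.sum_univ_succ] at h
    simp only [baryCoord_apply_zero, permuteCoord_apply, Function.comp_apply]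
    linarith
  | succ i => simp only [baryCoord_apply_succ, permuteCoord_apply, Function.comp_apply]

lemma permuteCoord_involutive {τ : Equiv.Perm (Fin (n + 1))} (hτ : Function.Involutive τ) :
    Function.Involutive (permuteCoord τ) := fun y =>
  baryCoord_injective <| by
    rw [baryCoord_permuteCoord, baryCoord_permuteCoord, Function.comp_assoc, hτ.comp_self,
      Function.comp_id]

lemma preimage_permuteCoord_vertexCell (τ : Equiv.Perm (Fin (n + 1))) (j : Fin (n + 1)) :
    permuteCoord τ ⁻¹' vertexCell n j = vertexCell n (τ j) := by
  ext y
  simp only [vertexCell, Set.mem_preimage, Set.mem_ofPred_eq, baryCoord_permuteCoord,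
    Function.comp_apply]
  exact τ.forall_congr fun _ => Iff.rfl

lemma volume_vertexCell (j : Fin (n + 1)) : volume (vertexCell n j) = volume (vertexCell n 0) := by
  have hf := permuteCoord_involutive (Equiv.swap_apply_self 0 j)
  rw [← Measure.addHaar_image_affineMap_of_involutive volume hf,
    Set.image_eq_preimage_of_inverse hf.leftInverse hf.rightInverse,
    preimage_permuteCoord_vertexCell, Equiv.swap_apply_right]

lemma volume_cornerSimplex : volume (cornerSimplex n) = (n + 1) * volume (vertexCell n 0) := by
  rw [← iUnion_vertexCell, measure_iUnion₀]
  · simp [volume_vertexCell]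
  · intro j k hjk
    refine measure_mono_null (fun y hy => ?_) (volume_setOf_baryCoord_eq hjk)
    exact le_antisymm (hy.2 j).2 (hy.1 k).2
  · exact fun j => (isClosed_vertexCell j).measurableSet.nullMeasurableSet

variable {V : Type*} [AddCommGroup V] [Module ℝ V]

noncomputable def baryCombination (p : Fin (n + 1) → V) : (E n) →ᵃ[ℝ] V :=
  (Fintype.linearCombination ℝ p).toAffineMap.comp baryCoord

lemma baryCombination_cornerVertex (p : Fin (n + 1) → V) (k : Fin (n + 1)) :
    baryCombination p (cornerVertex k) = p k := by
  simp [baryCombination, baryCoord_cornerVertex]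

lemma image_baryCombination_cornerSimplex (p : Fin (n + 1) → E n) :
    baryCombination p '' cornerSimplex n = convexHull ℝ (Set.range p) := by
  rw [← convexHull_range_cornerVertex, AffineMap.image_convexHull, ← Set.range_comp,
    show ⇑(baryCombination p) ∘ cornerVertex = p from funext (baryCombination_cornerVertex p)]

theorem volume_image_vertexCell (p : Fin (n + 1) → E n) :
    volume (baryCombination p '' vertexCell n 0) =
      ((n : ENNReal) + 1)⁻¹ * volume (convexHull ℝ (Set.range p)) := by
  rw [← image_baryCombination_cornerSimplex, Measure.addHaar_image_affineMap,
    Measure.addHaar_image_affineMap, volume_cornerSimplex, mul_left_comm,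
    ← mul_assoc ((n : ENNReal) + 1)⁻¹, ENNReal.inv_mul_cancel (by positivity) (by finiteness),
    one_mul]

end CornerSimplex

section MedianDualPoints

variable {V W : Type*} [AddCommGroup V] [Module ℝ V] [AddCommGroup W] [Module ℝ W]

def medianDualPoints (a b c d : V) : Set V :=
  {a, (1/2 : ℝ) • (a + b), (1/2 : ℝ) • (a + c), (1/2 : ℝ) • (a + d),
    (1/3 : ℝ) • (a + b + c), (1/3 : ℝ) • (a + b + d), (1/3 : ℝ) • (a + c + d),
    (1/4 : ℝ) • (a + b + c + d)}

lemma image_medianDualPoints (f : V →ᵃ[ℝ] W) (a b c d : V) :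
    f '' medianDualPoints a b c d = medianDualPoints (f a) (f b) (f c) (f d) := by
  obtain ⟨t, ht⟩ : ∃ t, f 0 = t := ⟨_, rfl⟩
  have hf : ∀ x, f x = f.linear x + t := fun x => ht ▸ congrFun f.decomp x
  simp only [medianDualPoints, Set.image_insert_eq, Set.image_singleton, hf, map_add, map_smul]
  iterate 7 refine congrArg₂ insert (by module) ?_
  exact congrArg _ (by module)

lemma medianDualPoints_swap_bc (a b c d : V) :
    medianDualPoints a c b d = medianDualPoints a b c d := by
  ext x
  simp only [medianDualPoints, Set.mem_insert_iff, Set.mem_singleton_iff, add_right_comm a c b]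
  tauto

lemma medianDualPoints_swap_cd (a b c d : V) :
    medianDualPoints a b d c = medianDualPoints a b c d := by
  ext x
  simp only [medianDualPoints, Set.mem_insert_iff, Set.mem_singleton_iff, add_right_comm a d c,
    add_right_comm (a + b) d c]
  tauto

lemma medianDualPoints_swap_bd (a b c d : V) :
    medianDualPoints a d c b = medianDualPoints a b c d := by
  rw [medianDualPoints_swap_bc a c d b, medianDualPoints_swap_cd, medianDualPoints_swap_bc]

lemma mem_convexHull_medianDualPoints {a b c d : V} {t₀ t₁ t₂ t₃ : ℝ} (h₁ : 0 ≤ t₁)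
    (h₂ : 0 ≤ t₂) (h₃ : 0 ≤ t₃) (h₁₀ : t₁ ≤ t₀) (h₂₀ : t₂ ≤ t₀) (h₃₀ : t₃ ≤ t₀)
    (hsum : t₀ + t₁ + t₂ + t₃ = 1) :
    t₀ • a + t₁ • b + t₂ • c + t₃ • d ∈ convexHull ℝ (medianDualPoints a b c d) := by
  wlog h₂₁ : t₂ ≤ t₁ generalizing b c t₁ t₂
  · rw [← medianDualPoints_swap_bc, add_right_comm (t₀ • a)]
    apply this <;> linarith
  wlog h₃₁ : t₃ ≤ t₁ generalizing b d t₁ t₃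
  · rw [← medianDualPoints_swap_bd,
      show t₀ • a + t₁ • b + t₂ • c + t₃ • d = t₀ • a + t₃ • d + t₂ • c + t₁ • b by abel]
    apply this <;> linarith
  wlog h₃₂ : t₃ ≤ t₂ generalizing c d t₂ t₃
  · rw [← medianDualPoints_swap_cd, add_right_comm _ (t₂ • c)]
    apply this <;> linarith
  -- the Kuhn simplex of the ordering `t₀ ≥ t₁ ≥ t₂ ≥ t₃`
  have hdecomp : t₀ • a + t₁ • b + t₂ • c + t₃ • d =
      ∑ i, ![t₀ - t₁, 2 * (t₁ - t₂), 3 * (t₂ - t₃), 4 * t₃] i •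
        ![a, (1/2 : ℝ) • (a + b), (1/3 : ℝ) • (a + b + c), (1/4 : ℝ) • (a + b + c + d)] i := by
    simp only [Fin.sum_univ_four, Matrix.cons_val]
    module
  rw [hdecomp]
  refine (convex_convexHull ℝ _).sum_mem (fun i _ => ?_) ?_ (fun i _ => subset_convexHull ℝ _ ?_)
  · fin_cases i <;> simp <;> linarith
  · simp only [Fin.sum_univ_four, Matrix.cons_val]
    linarith
  · fin_cases i <;> simp [medianDualPoints]

end MedianDualPoints

lemma convexHull_medianDualPoints_cornerVertex :
    convexHull ℝ (medianDualPoints (cornerVertex 0) (cornerVertex 1) (cornerVertex 2)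
      (cornerVertex 3)) = vertexCell 3 0 := by
  refine subset_antisymm (convexHull_min ?_ (convex_vertexCell 0)) fun y hy => ?_
  · change _ ⊆ baryCoord ⁻¹' {v : Fin 4 → ℝ | ∀ k, 0 ≤ v k ∧ v k ≤ v 0}
    rw [← Set.image_subset_iff, image_medianDualPoints]
    simp [baryCoord_cornerVertex, medianDualPoints, Set.insert_subset_iff, Fin.forall_fin_succ]
  · have hsum := sum_baryCoord y
    rw [Fin.sum_univ_four] at hsum
    rw [← sum_baryCoord_smul_cornerVertex y, Fin.sum_univ_four]
    exact mem_convexHull_medianDualPoints (hy 1).1 (hy 2).1 (hy 3).1 (hy 1).2 (hy 2).2 (hy 3).2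
      hsum

end MedianDual

open MedianDual in
/-- The median dual volume contribution of a tetrahedron `{x₁, x₂, x₃, x₄} ⊆ ℝ³` to each of
its vertices — the volume of the convex hull of the vertex `x₁`, the midpoints of the
three edges at `x₁`, the centroids of the three faces containing `x₁`, and the centroid
of the tetrahedron — is exactly one fourth of the tetrahedron's volume. -/
theorem median_dual_volume_one_fourth (x₁ x₂ x₃ x₄ : EuclideanSpace ℝ (Fin 3)) :
    volume (convexHull ℝ
        ({x₁,
          (1/2 : ℝ) • (x₁ + x₂), (1/2 : ℝ) • (x₁ + x₃), (1/2 : ℝ) • (x₁ + x₄),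
          (1/3 : ℝ) • (x₁ + x₂ + x₃), (1/3 : ℝ) • (x₁ + x₂ + x₄), (1/3 : ℝ) • (x₁ + x₃ + x₄),
          (1/4 : ℝ) • (x₁ + x₂ + x₃ + x₄)} :
          Set (EuclideanSpace ℝ (Fin 3))))
      = (1/4 : ENNReal) *
          volume (convexHull ℝ ({x₁, x₂, x₃, x₄} : Set (EuclideanSpace ℝ (Fin 3)))) := by
  have hpoints : medianDualPoints x₁ x₂ x₃ x₄ = baryCombination ![x₁, x₂, x₃, x₄] ''
      medianDualPoints (cornerVertex 0) (cornerVertex 1) (cornerVertex 2) (cornerVertex 3) := by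
    simp [image_medianDualPoints, baryCombination_cornerVertex]
  change volume (convexHull ℝ (medianDualPoints x₁ x₂ x₃ x₄)) = _
  rw [hpoints, ← AffineMap.image_convexHull, convexHull_medianDualPoints_cornerVertex,
    volume_image_vertexCell]
  simp only [Matrix.range_cons, Matrix.range_empty, Set.union_empty, Set.singleton_union]
  norm_num
end
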